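/- arXiv:2104.14347 — 3 statements merged into one kernel-verified Lean document; each statement's English description precedes it below -/
import Mathlib

section
/- A picking sequence π on n agents and m items satisfies weighted proportionality up to one item (WPROP1) — that is, for every profile of additive utility functions the allocation it produces is WPROP1 — if and only if for every prefix of π of length k and every agent i, we have t_i ≥ (w_i / Σ_{i'∈N} w_{i'}) · k − 1, where t_i denotes the number of picks of agent i in that prefix. -/
open Finset

/-- The favorite item of an agent with item-utility function `u` among a remaining
set `R` of items: a highest-valued item, ties broken in favor of the lower-numbered item. -/
noncomputable def favorite {m : ℕ} (u : Fin m → ℝ) (R : Finset (Fin m)) : Option (Fin m) :=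
  if h : (R.filter fun j => ∀ j' ∈ R, u j' ≤ u j).Nonempty then
    some ((R.filter fun j => ∀ j' ∈ R, u j' ≤ u j).min' h)
  else none

/-- One step of the picking process: agent `a` picks her favorite remaining item. -/
noncomputable def pickStep {n m : ℕ} (u : Fin n → Fin m → ℝ)
    (st : Finset (Fin m) × (Fin n → Finset (Fin m))) (a : Fin n) :
    Finset (Fin m) × (Fin n → Finset (Fin m)) :=
  match favorite (u a) st.1 with
  | none => st
  | some j => (st.1.erase j, Function.update st.2 a (insert j (st.2 a)))

/-- The allocation produced by letting agents pick their favorite remaining items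
in the order given by the picking sequence `π`. -/
noncomputable def allocate {n m : ℕ} (u : Fin n → Fin m → ℝ) (π : List (Fin n)) :
    Fin n → Finset (Fin m) :=
  (π.foldl (pickStep u) (Finset.univ, fun _ => ∅)).2

/-- Weighted proportionality up to one item. -/
def isWPROP1 {n m : ℕ} (w : Fin n → ℝ) (u : Fin n → Fin m → ℝ)
    (M : Fin n → Finset (Fin m)) : Prop :=
  ∀ i : Fin n, ∃ B ⊆ Finset.univ \ M i, B.card ≤ 1 ∧
    w i / (∑ i', w i') * (∑ x, u i x) - (∑ x ∈ B, u i x) ≤ ∑ x ∈ M i, u i x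

/-! Necessity: if every agent values exactly some `k` items, at `1` each, then every turn taken while
one of them remains hands one out, so agent `i` collects at most `t_i` of them, against a
proportional share of `r k` (with `r = w_i / Σ w`) and at most `1` for the extra item.

Sufficiency: run along the sequence carrying a slack `lam` in the prefix condition and a bound `b`
on the value, to agent `i`, of every remaining item she will not receive. A pick by `i` raises the
slack by `1 - r` and lets `b` drop to the value of the item just taken, since greedy picking means
nothing left is worth more to her; a pick by anyone else spends `r` of the slack on an item worth at
most `b`. Starting with slack `1` and `b` the value of her best item outside her bundle gives WPROP1.
-/

variable {n m : ℕ}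

lemma List.count_take_succ_cons {α : Type*} [DecidableEq α] (a i : α) (l : List α) (k : ℕ) :
    ((a :: l).take (k + 1)).count i = (l.take k).count i + if a = i then 1 else 0 := by
  simp only [List.take_succ_cons, List.count_cons, beq_iff_eq]

lemma favorite_spec {u : Fin m → ℝ} {R : Finset (Fin m)} {j : Fin m}
    (h : favorite u R = some j) : j ∈ R ∧ ∀ x ∈ R, u x ≤ u j := by
  unfold favorite at h
  split_ifs at h with hne
  exact Option.some_inj.mp h ▸ (mem_filter.mp (min'_mem _ hne))

lemma exists_favorite_eq_some (u : Fin m → ℝ) {R : Finset (Fin m)} (hR : R.Nonempty) :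
    ∃ j, favorite u R = some j := by
  obtain ⟨j, hj, hmax⟩ := R.exists_max_image u hR
  exact ⟨_, dif_pos ⟨j, mem_filter.2 ⟨hj, hmax⟩⟩⟩

section pickStep

variable {u : Fin n → Fin m → ℝ}

lemma pickStep_of_favorite_eq_some {st : Finset (Fin m) × (Fin n → Finset (Fin m))}
    {a : Fin n} {j : Fin m} (h : favorite (u a) st.1 = some j) :
    pickStep u st a = (st.1.erase j, Function.update st.2 a (insert j (st.2 a))) := by
  simp only [pickStep, h]

lemma pickStep_subset (st : Finset (Fin m) × (Fin n → Finset (Fin m))) (a b : Fin n) :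
    (pickStep u st a).1 ⊆ st.1 ∧ (pickStep u st a).2 b ⊆ st.2 b ∪ st.1 := by
  unfold pickStep
  split
  · exact ⟨subset_rfl, subset_union_left⟩
  next j hj =>
    refine ⟨erase_subset _ _, ?_⟩
    rcases eq_or_ne b a with rfl | hba
    · simp only [Function.update_self]
      exact insert_subset (mem_union_right _ (favorite_spec hj).1) subset_union_left
    · simp only [Function.update_of_ne hba, subset_union_left]

lemma foldl_pickStep_subset (π : List (Fin n)) (st : Finset (Fin m) × (Fin n → Finset (Fin m)))
    (b : Fin n) : (π.foldl (pickStep u) st).2 b ⊆ st.2 b ∪ st.1 := by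
  induction π generalizing st with
  | nil => exact subset_union_left
  | cons a π ih =>
    obtain ⟨h₁, h₂⟩ := pickStep_subset st a b
    exact (ih _).trans (union_subset h₂ (h₁.trans subset_union_right))

lemma notMem_foldl_pickStep {π : List (Fin n)} {st : Finset (Fin m) × (Fin n → Finset (Fin m))}
    {b : Fin n} {x : Fin m} (hR : x ∉ st.1) (hA : x ∉ st.2 b) :
    x ∉ (π.foldl (pickStep u) st).2 b := fun hx =>
  (mem_union.mp (foldl_pickStep_subset π st b hx)).elim hA hR

end pickStep

lemma card_foldl_pickStep_inter_le (L : Finset (Fin m)) {u : Fin n → Fin m → ℝ}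
    (hu : ∀ a x, u a x = if x ∈ L then 1 else 0) (i : Fin n) (π : List (Fin n))
    (st : Finset (Fin m) × (Fin n → Finset (Fin m))) :
    #((π.foldl (pickStep u) st).2 i ∩ L) ≤ #(st.2 i ∩ L) + (π.take #(st.1 ∩ L)).count i := by
  induction π generalizing st with
  | nil => simp
  | cons a π ih =>
    obtain hRL | ⟨x, hx⟩ := (st.1 ∩ L).eq_empty_or_nonempty
    · rw [hRL, card_empty, List.take_zero, List.count_nil, add_zero]
      refine card_le_card fun y hy => ?_
      obtain ⟨hyF, hyL⟩ := mem_inter.mp hy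
      rcases mem_union.mp (foldl_pickStep_subset (a :: π) st i hyF) with hyA | hyR
      · exact mem_inter.mpr ⟨hyA, hyL⟩
      · exact absurd (mem_inter.mpr ⟨hyR, hyL⟩) (hRL ▸ notMem_empty y)
    obtain ⟨hxR, hxL⟩ := mem_inter.mp hx
    obtain ⟨j, hj⟩ := exists_favorite_eq_some (u a) ⟨x, hxR⟩
    obtain ⟨hjR, hjmax⟩ := favorite_spec hj
    have hjL : j ∈ L := by
      by_contra hjL
      have := hjmax x hxR
      simp only [hu, hxL, hjL, if_true, if_false] at this
      norm_num at this
    have hcard : #(st.1 ∩ L) = #(st.1.erase j ∩ L) + 1 := by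
      rw [erase_inter, card_erase_add_one (mem_inter.mpr ⟨hjR, hjL⟩)]
    have hbundle : #((Function.update st.2 a (insert j (st.2 a))) i ∩ L)
        ≤ #(st.2 i ∩ L) + if a = i then 1 else 0 := by
      rcases eq_or_ne a i with rfl | hai
      · rw [Function.update_self, if_pos rfl, insert_inter_of_mem hjL]
        exact card_insert_le _ _
      · rw [Function.update_of_ne (Ne.symm hai), if_neg hai, add_zero]
    have := ih (pickStep u st a)
    rw [pickStep_of_favorite_eq_some hj] at this
    dsimp only at this
    rw [List.foldl_cons, pickStep_of_favorite_eq_some hj, hcard, List.count_take_succ_cons]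
    omega

lemma mul_add_mul_min_le {r lam b c : ℝ} (hr : r ≤ 1) (hlam : 0 ≤ lam) :
    r * c + (lam + 1 - r) * min b c ≤ c + lam * b := by
  nlinarith [mul_le_mul_of_nonneg_left (min_le_left b c) hlam,
    mul_le_mul_of_nonneg_left (min_le_right b c) (sub_nonneg.mpr hr)]

lemma mul_sum_add_sum_le_sum_foldl_pickStep {u : Fin n → Fin m → ℝ} {i : Fin n}
    (hu : ∀ x, 0 ≤ u i x) {r : ℝ} (hr₀ : 0 ≤ r) (hr₁ : r ≤ 1) (π : List (Fin n))
    (st : Finset (Fin m) × (Fin n → Finset (Fin m))) (hlen : π.length = #st.1)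
    (hdisj : Disjoint st.1 (st.2 i)) {lam b : ℝ} (hlam : 0 ≤ lam) (hb : 0 ≤ b)
    (hcount : ∀ k ≤ π.length, r * k - lam ≤ (π.take k).count i)
    (hlost : ∀ x ∈ st.1, x ∉ (π.foldl (pickStep u) st).2 i → u i x ≤ b) :
    r * ∑ x ∈ st.1, u i x + ∑ x ∈ st.2 i, u i x
      ≤ ∑ x ∈ (π.foldl (pickStep u) st).2 i, u i x + lam * b := by
  induction π generalizing st lam b with
  | nil =>
    rw [List.length_nil, eq_comm, card_eq_zero] at hlen
    simp only [hlen, sum_empty, mul_zero, zero_add, List.foldl_nil, le_add_iff_nonneg_right]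
    positivity
  | cons a π ih =>
    obtain ⟨j, hj⟩ := exists_favorite_eq_some (u a) (R := st.1)
      (card_pos.mp (hlen ▸ Nat.succ_pos π.length))
    obtain ⟨hjR, hjmax⟩ := favorite_spec hj
    have hcount' (k : ℕ) (hk : k ≤ π.length) :
        r * k + r - lam ≤ (π.take k).count i + if a = i then 1 else 0 := by
      have := hcount (k + 1) (Nat.succ_le_succ hk)
      rw [List.count_take_succ_cons] at this
      push_cast at this
      linarith
    rw [List.foldl_cons, pickStep_of_favorite_eq_some hj] at hlost ⊢
    have hlen' : π.length = #(st.1.erase j) := by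
      rw [card_erase_of_mem hjR, ← hlen, List.length_cons, Nat.add_sub_cancel]
    have hdisj' := hdisj.mono_left (erase_subset j st.1)
    rw [← add_sum_erase st.1 (u i) hjR]
    rcases eq_or_ne a i with rfl | hai
    · simp only [if_true] at hcount'
      have key := ih _ hlen' (by simpa using hdisj') (by linarith : 0 ≤ lam + 1 - r)
        (le_min hb (hu j)) (fun k hk => by linarith [hcount' k hk])
        (fun x hx hxF => le_min (hlost x (mem_of_mem_erase hx) hxF)
          (hjmax x (mem_of_mem_erase hx)))
      dsimp only at key
      rw [Function.update_self, sum_insert (disjoint_left.mp hdisj hjR)] at key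
      nlinarith [mul_add_mul_min_le (b := b) (c := u a j) hr₁ hlam]
    · simp only [if_neg hai, add_zero] at hcount'
      have hr_le_lam : r ≤ lam := by simpa using hcount' 0 (Nat.zero_le _)
      have key := ih _ hlen' (by simpa [Function.update_of_ne hai.symm] using hdisj')
        (by linarith : 0 ≤ lam - r) hb (fun k hk => by linarith [hcount' k hk])
        (fun x hx hxF => hlost x (mem_of_mem_erase hx) hxF)
      dsimp only at key
      rw [Function.update_of_ne hai.symm] at key
      have hjF : j ∉ (π.foldl (pickStep u)
          (st.1.erase j, Function.update st.2 a (insert j (st.2 a)))).2 i :=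
        notMem_foldl_pickStep (notMem_erase j st.1)
          (by simpa [Function.update_of_ne hai.symm] using disjoint_left.mp hdisj hjR)
      nlinarith [mul_le_mul_of_nonneg_left (hlost j hjR hjF) hr₀]

lemma exists_card_le_one_forall_le_sum {α M : Type*} [AddCommMonoid M] [LinearOrder M]
    (s : Finset α) (f : α → M) : ∃ B ⊆ s, #B ≤ 1 ∧ ∀ x ∈ s, f x ≤ ∑ y ∈ B, f y := by
  obtain rfl | hs := s.eq_empty_or_nonempty
  · exact ⟨∅, subset_rfl, by simp, by simp⟩
  obtain ⟨j, hj, hmax⟩ := s.exists_max_image f hs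
  exact ⟨{j}, singleton_subset_iff.mpr hj, by simp, by simpa using hmax⟩

theorem count_take_ge_of_forall_isWPROP1 {w : Fin n → ℝ} {π : List (Fin n)}
    (hπ : ∀ u : Fin n → Fin m → ℝ, (∀ i j, 0 ≤ u i j) → isWPROP1 w u (allocate u π))
    {k : ℕ} (hk : k ≤ m) (i : Fin n) :
    w i / (∑ i', w i') * k - 1 ≤ ((π.take k).count i : ℝ) := by
  obtain ⟨L, -, hL⟩ := exists_subset_card_eq (s := (univ : Finset (Fin m))) (by simpa using hk)
  set u : Fin n → Fin m → ℝ := fun _ x => if x ∈ L then 1 else 0 with hu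
  have hsum (s : Finset (Fin m)) : ∑ x ∈ s, u i x = #(s ∩ L) := by
    rw [hu, sum_boole, filter_mem_eq_inter]
  obtain ⟨B, -, hB, hprop⟩ := hπ u (fun _ _ => by positivity) i
  have hbundle := card_foldl_pickStep_inter_le L (u := u) (fun _ _ => rfl) i π (univ, fun _ => ∅)
  simp only [empty_inter, card_empty, univ_inter, hL, zero_add] at hbundle
  simp only [hsum, univ_inter, hL] at hprop
  have hBL : (#(B ∩ L) : ℝ) ≤ 1 := by exact_mod_cast (card_le_card inter_subset_left).trans hB
  have : (#(allocate u π i ∩ L) : ℝ) ≤ (π.take k).count i := by exact_mod_cast hbundle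
  linarith

theorem isWPROP1_allocate_of_count_take_ge {w : Fin n → ℝ} (hw : ∀ i, 0 ≤ w i)
    {π : List (Fin n)} (hlen : π.length = m)
    (hπ : ∀ k ≤ m, ∀ i, w i / (∑ i', w i') * k - 1 ≤ ((π.take k).count i : ℝ))
    (u : Fin n → Fin m → ℝ) (hu : ∀ i j, 0 ≤ u i j) : isWPROP1 w u (allocate u π) := by
  intro i
  obtain ⟨B, hBsub, hB, hBmax⟩ := exists_card_le_one_forall_le_sum (univ \ allocate u π i) (u i)
  refine ⟨B, hBsub, hB, ?_⟩
  have hW := sum_nonneg fun i' (_ : i' ∈ univ) => hw i'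
  have key := mul_sum_add_sum_le_sum_foldl_pickStep (hu i) (div_nonneg (hw i) hW)
    (div_le_one_of_le₀ (single_le_sum (fun i' _ => hw i') (mem_univ i)) hW) π
    (univ, fun _ => ∅) (by simpa using hlen) (disjoint_empty_right _) zero_le_one
    (sum_nonneg fun x _ => hu i x) (fun k hk => hπ k (hlen ▸ hk) i)
    (fun x _ hx => hBmax x (mem_sdiff.mpr ⟨mem_univ x, hx⟩))
  simp only [sum_empty, add_zero, one_mul] at key
  exact sub_le_iff_le_add.mpr key

/-- A picking sequence `π` satisfies WPROP1 (for every profile of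
additive utility functions the allocation it produces is WPROP1) if and only if for
every prefix of `π` of length `k` and every agent `i`,
`t_i ≥ (w_i / Σ_{i'} w_{i'}) · k - 1`. -/
theorem pickingSequence_WPROP1_iff
    (n m : ℕ) (w : Fin n → ℝ) (hw : ∀ i, 0 < w i)
    (π : List (Fin n)) (hlen : π.length = m) :
    (∀ u : Fin n → Fin m → ℝ, (∀ i j, 0 ≤ u i j) → isWPROP1 w u (allocate u π)) ↔
      ∀ (k : ℕ), k ≤ m → ∀ i : Fin n,
        w i / (∑ i', w i') * k - 1 ≤ ((π.take k).count i : ℝ) :=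
  ⟨fun h _ hk i => count_take_ge_of_forall_isWPROP1 h hk i,
    fun h => isWPROP1_allocate_of_count_take_ge (fun i => (hw i).le) hlen h⟩
end

section
/- Let π be a picking sequence on n agents and m items, and let π' be a picking sequence on n+1 agents and m items that can be obtained from π by inserting some occurrences (possibly none) of agent n+1 into π and then trimming the resulting sequence to length m. Fix additive utility functions of the n+1 agents over the m items (where in the instance for π only the first n agents are present, with the same utilities). Then each of the first n agents receives at least as much utility from the allocation produced by π as from the allocation produced by π'. In particular, any population-consistent family of picking sequences satisfies population-monotonicity. -/
open Finset

lemma favorite_empty {m : ℕ} (u : Fin m → ℝ) : favorite u (∅ : Finset (Fin m)) = none := by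
  simp [favorite]

lemma favorite_mem {m : ℕ} {u : Fin m → ℝ} {R : Finset (Fin m)} {j : Fin m}
    (h : favorite u R = some j) : j ∈ R ∧ ∀ x ∈ R, u x ≤ u j := by
  unfold favorite at h
  split at h
  · rename_i hne
    injection h with h
    have hmem := Finset.min'_mem _ hne
    rw [h] at hmem
    simpa [Finset.mem_filter] using hmem
  · exact absurd h (by simp)

lemma favorite_some_of_nonempty {m : ℕ} (u : Fin m → ℝ) {R : Finset (Fin m)}
    (h : R.Nonempty) : ∃ j, favorite u R = some j := by
  obtain ⟨a, ha, hamax⟩ := R.exists_max_image u h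
  have hne : (R.filter fun j => ∀ j' ∈ R, u j' ≤ u j).Nonempty :=
    ⟨a, by simpa [Finset.mem_filter] using ⟨ha, hamax⟩⟩
  exact ⟨_, by unfold favorite; rw [dif_pos hne]⟩

/-- The key tie-breaking comparison lemma: for `R' ⊆ R` with `R'` nonempty, the
favorites `jA` of `R` and `jB` of `R'` satisfy `u jB ≤ u jA` and
`R'.erase jB ⊆ R.erase jA`. -/
lemma favorite_subset {m : ℕ} (u : Fin m → ℝ) {R' R : Finset (Fin m)}
    (hsub : R' ⊆ R) (h' : R'.Nonempty) :
    ∃ jA jB, favorite u R = some jA ∧ favorite u R' = some jB ∧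
      u jB ≤ u jA ∧ R'.erase jB ⊆ R.erase jA := by
  obtain ⟨jA, hA⟩ := favorite_some_of_nonempty u (h'.mono hsub)
  obtain ⟨jB, hB⟩ := favorite_some_of_nonempty u h'
  obtain ⟨hAmem, hAmax⟩ := favorite_mem hA
  obtain ⟨hBmem, hBmax⟩ := favorite_mem hB
  have hval : u jB ≤ u jA := hAmax _ (hsub hBmem)
  refine ⟨jA, jB, hA, hB, hval, ?_⟩
  intro x hx
  rw [Finset.mem_erase] at hx ⊢
  refine ⟨?_, hsub hx.2⟩
  intro hxA
  apply hx.1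
  rw [hxA]
  have hjA' : jA ∈ R' := hxA ▸ hx.2
  -- now `jA ∈ R'`; we show `jA = jB`.
  have hA' : u jA ≤ u jB := hBmax _ hjA'
  have hBA : u jB = u jA := le_antisymm hval hA'
  -- jB is in the argmax set of R
  have hjBFA : jB ∈ R.filter fun j => ∀ j' ∈ R, u j' ≤ u j := by
    rw [Finset.mem_filter]
    exact ⟨hsub hBmem, fun y hy => (hAmax y hy).trans hBA.ge⟩
  -- jA is in the argmax set of R'
  have hjAFB : jA ∈ R'.filter fun j => ∀ j' ∈ R', u j' ≤ u j := by
    rw [Finset.mem_filter]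
    exact ⟨hjA', fun y hy => hAmax y (hsub hy)⟩
  -- extract the min' characterizations
  unfold favorite at hA hB
  split at hA
  · injection hA with hA
    split at hB
    · injection hB with hB
      have h1 : jA ≤ jB := hA ▸ Finset.min'_le _ _ hjBFA
      have h2 : jB ≤ jA := hB ▸ Finset.min'_le _ _ hjAFB
      exact le_antisymm h1 h2
    · exact absurd hB (by simp)
  · exact absurd hA (by simp)

/-- The utility accumulated by agent `i` when the sequence `π` of agents picks
items starting from remaining set `R`. -/
noncomputable def gain {n m : ℕ} (u : Fin n → Fin m → ℝ) (i : Fin n) :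
    List (Fin n) → Finset (Fin m) → ℝ
  | [], _ => 0
  | a :: l, R =>
    match favorite (u a) R with
    | none => gain u i l R
    | some j => (if a = i then u i j else 0) + gain u i l (R.erase j)

lemma gain_nil {n m : ℕ} (u : Fin n → Fin m → ℝ) (i : Fin n) (R : Finset (Fin m)) :
    gain u i [] R = 0 := rfl

lemma gain_cons_none {n m : ℕ} {u : Fin n → Fin m → ℝ} {i a : Fin n}
    {l : List (Fin n)} {R : Finset (Fin m)} (h : favorite (u a) R = none) :
    gain u i (a :: l) R = gain u i l R := by
  simp [gain, h]

lemma gain_cons_some {n m : ℕ} {u : Fin n → Fin m → ℝ} {i a : Fin n}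
    {l : List (Fin n)} {R : Finset (Fin m)} {j : Fin m} (h : favorite (u a) R = some j) :
    gain u i (a :: l) R = (if a = i then u i j else 0) + gain u i l (R.erase j) := by
  simp [gain, h]

lemma gain_nonneg {n m : ℕ} {u : Fin n → Fin m → ℝ} {i : Fin n}
    (hu : ∀ j, 0 ≤ u i j) : ∀ (π : List (Fin n)) (R : Finset (Fin m)), 0 ≤ gain u i π R
  | [], R => le_of_eq (gain_nil u i R).symm
  | a :: l, R => by
    cases h : favorite (u a) R with
    | none => rw [gain_cons_none h]; exact gain_nonneg hu l R
    | some j =>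
      rw [gain_cons_some h]
      have := gain_nonneg hu l (R.erase j)
      have hif : (0 : ℝ) ≤ if a = i then u i j else 0 := by
        split <;> simp [hu]
      linarith

/-- Main comparison lemma: if the non-newcomer entries of `σ` form (in order) a
prefix of `π`, and the remaining set `RB` for the `σ`-run is contained in the
remaining set `RA` for the `π`-run, then agent `i` gains at most as much in the
`σ`-run as in the `π`-run. -/
lemma gain_le {n m : ℕ} (u : Fin (n + 1) → Fin m → ℝ) (hu : ∀ i j, 0 ≤ u i j) (i : Fin n) :
    ∀ (σ : List (Fin (n + 1))) (π : List (Fin n)),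
      σ.filter (fun a => a ≠ Fin.last n) <+: π.map Fin.castSucc →
      ∀ (RA RB : Finset (Fin m)), RB ⊆ RA →
      gain u i.castSucc σ RB ≤ gain (fun a y => u a.castSucc y) i π RA
  | [], π, _, RA, RB, _ => by
    rw [gain_nil]
    exact gain_nonneg (u := fun a y => u a.castSucc y) (i := i)
      (fun j => hu i.castSucc j) π RA
  | a :: σ', π, hpre, RA, RB, hsub => by
    by_cases ha : a = Fin.last n
    · -- the newcomer picks: `RB` shrinks, `RA` unchanged.
      have hfil : (a :: σ').filter (fun a => a ≠ Fin.last n) =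
          σ'.filter (fun a => a ≠ Fin.last n) := by
        simp [List.filter_cons, ha]
      rw [hfil] at hpre
      cases h : favorite (u a) RB with
      | none =>
        rw [gain_cons_none h]
        exact gain_le u hu i σ' π hpre RA RB hsub
      | some j =>
        rw [gain_cons_some h]
        have hne : a ≠ i.castSucc := by
          rw [ha]; exact (Fin.castSucc_lt_last i).ne'
        rw [if_neg hne, zero_add]
        exact gain_le u hu i σ' π hpre RA (RB.erase j)
          ((Finset.erase_subset _ _).trans hsub)
    · -- an original agent picks in both runs.
      have hfil : (a :: σ').filter (fun a => a ≠ Fin.last n) =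
          a :: σ'.filter (fun a => a ≠ Fin.last n) := by
        simp [List.filter_cons, ha]
      rw [hfil] at hpre
      cases π with
      | nil => simp at hpre
      | cons b π' =>
        rw [List.map_cons, List.cons_prefix_cons] at hpre
        obtain ⟨hab, hpre'⟩ := hpre
        by_cases hRB : RB.Nonempty
        · obtain ⟨jA, jB, hA, hB, hval, hsub'⟩ := favorite_subset (u a) hsub hRB
          rw [gain_cons_some hB]
          have hA' : favorite ((fun a y => u a.castSucc y) b) RA = some jA := by
            show favorite (fun y => u b.castSucc y) RA = some jA
            rw [← hab]; exact hA
          rw [gain_cons_some (u := fun a y => u a.castSucc y) (i := i) (a := b) hA']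
          have hrec := gain_le u hu i σ' π' hpre' (RA.erase jA) (RB.erase jB) hsub'
          have hifle : (if a = i.castSucc then u i.castSucc jB else 0) ≤
              (if b = i then (fun a y => u a.castSucc y) i jA else 0) := by
            by_cases hbi : b = i
            · have hai : a = i.castSucc := by rw [hab, hbi]
              rw [if_pos hai, if_pos hbi]
              show u i.castSucc jB ≤ u i.castSucc jA
              rw [← hai]
              exact hval
            · have hne2 : a ≠ i.castSucc := by
                rw [hab]
                exact fun hc => hbi (Fin.castSucc_injective n hc)
              rw [if_neg hne2, if_neg hbi]
          linarith
        · rw [Finset.not_nonempty_iff_eq_empty] at hRB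
          subst hRB
          rw [gain_cons_none (favorite_empty _)]
          cases h : favorite ((fun a y => u a.castSucc y) b) RA with
          | none =>
            rw [gain_cons_none (u := fun a y => u a.castSucc y) (i := i) (a := b) h]
            exact gain_le u hu i σ' π' hpre' RA ∅ (Finset.empty_subset _)
          | some j =>
            rw [gain_cons_some (u := fun a y => u a.castSucc y) (i := i) (a := b) h]
            have hrec := gain_le u hu i σ' π' hpre' (RA.erase j) ∅ (Finset.empty_subset _)
            have hif : (0 : ℝ) ≤ if b = i then (fun a y => u a.castSucc y) i j else 0 := by
              split
              · exact hu i.castSucc j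
              · exact le_refl 0
            linarith

/-- Relating `allocate`'s sum for agent `i` to `gain`. -/
lemma sum_foldl {n m : ℕ} (u : Fin n → Fin m → ℝ) (i : Fin n) :
    ∀ (π : List (Fin n)) (st : Finset (Fin m) × (Fin n → Finset (Fin m))),
      Disjoint (st.2 i) st.1 →
      ∑ x ∈ (π.foldl (pickStep u) st).2 i, u i x =
        (∑ x ∈ st.2 i, u i x) + gain u i π st.1
  | [], st, _ => by simp [gain_nil]
  | a :: l, st, hdisj => by
    rw [List.foldl_cons]
    cases h : favorite (u a) st.1 with
    | none =>
      have hstep : pickStep u st a = st := by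
        unfold pickStep; rw [h]
      rw [hstep, gain_cons_none h]
      exact sum_foldl u i l st hdisj
    | some j =>
      have hjmem : j ∈ st.1 := (favorite_mem h).1
      have hstep : pickStep u st a =
          (st.1.erase j, Function.update st.2 a (insert j (st.2 a))) := by
        unfold pickStep; rw [h]
      rw [hstep, gain_cons_some h]
      set st' : Finset (Fin m) × (Fin n → Finset (Fin m)) :=
        (st.1.erase j, Function.update st.2 a (insert j (st.2 a))) with hst'
      have hdisj' : Disjoint (st'.2 i) st'.1 := by
        by_cases hai : a = i
        · subst hai
          simp only [hst', Function.update_self]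
          rw [Finset.disjoint_insert_left]
          exact ⟨fun hc => (Finset.mem_erase.mp hc).1 rfl,
            hdisj.mono_right (Finset.erase_subset _ _)⟩
        · simp only [hst', Function.update_of_ne (Ne.symm hai)]
          exact hdisj.mono_right (Finset.erase_subset _ _)
      rw [sum_foldl u i l st' hdisj']
      by_cases hai : a = i
      · subst hai
        have hjni : j ∉ st.2 a := Finset.disjoint_right.mp hdisj hjmem
        simp only [hst', Function.update_self, if_pos rfl]
        rw [Finset.sum_insert hjni]
        simp only [if_true]
        ring
      · simp only [hst', Function.update_of_ne (Ne.symm hai), if_neg hai]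
        ring

lemma allocate_sum {n m : ℕ} (u : Fin n → Fin m → ℝ) (i : Fin n) (π : List (Fin n)) :
    ∑ x ∈ allocate u π i, u i x = gain u i π Finset.univ := by
  have := sum_foldl u i π (Finset.univ, fun _ => ∅) (by simp)
  simpa [allocate] using this

/-- If `π'` (on `n + 1` agents and `m` items) is obtained from `π`
(on `n` agents and `m` items) by inserting occurrences of agent `n + 1` in some
positions (possibly none) and trimming the resulting sequence to length `m`
(formally: there is `σ` whose entries other than agent `n + 1` are, in order,
exactly those of `π`, with `π' = σ.take m`), then for any additive utilities each of
the first `n` agents receives at least as much utility from the allocation produced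
by `π` as from the allocation produced by `π'`. In particular, any
population-consistent family of picking sequences satisfies population-monotonicity. -/
theorem population_consistent_implies_population_monotone
    (n m : ℕ) (π : List (Fin n)) (π' σ : List (Fin (n + 1)))
    (hlen : π.length = m) (hlen' : π'.length = m)
    (hσ : σ.filter (fun a => a ≠ Fin.last n) = π.map Fin.castSucc)
    (htrim : π' = σ.take m)
    (u : Fin (n + 1) → Fin m → ℝ) (hu : ∀ i j, 0 ≤ u i j) (i : Fin n) :
    (∑ x ∈ allocate u π' i.castSucc, u i.castSucc x) ≤
      ∑ x ∈ allocate (fun a y => u a.castSucc y) π i, u i.castSucc x := by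
  have hRHS : ∑ x ∈ allocate (fun a y => u a.castSucc y) π i, u i.castSucc x =
      gain (fun a y => u a.castSucc y) i π Finset.univ :=
    allocate_sum (fun a y => u a.castSucc y) i π
  rw [allocate_sum u i.castSucc π', hRHS]
  have hpre : π'.filter (fun a => a ≠ Fin.last n) <+: π.map Fin.castSucc := by
    rw [← hσ, htrim]
    exact (List.take_prefix m σ).filter _
  exact gain_le u hu i π' π hpre Finset.univ Finset.univ (subset_refl _)
end

section
/- None of the five traditional divisor methods — Adams (f(t) = t), Jefferson (f(t) = t+1), Webster (f(t) = t + 1/2), Hill (f(t) = √(t(t+1))), and Dean (f(t) = t(t+1)/(t + 1/2)) — satisfies weight-monotonicity even when there are three agents: for each of these methods there exist an instance with three agents (a number of items, weights w_1 > w_2 > w_3 > 0, and additive utilities) and an increased weight w_1' > w_1 for agent 1 such that agent 1 receives strictly less utility from the allocation the method produces with weights (w_1', w_2, w_3) than with weights (w_1, w_2, w_3). -/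
open Finset

/-- A divisor method is given by a strictly increasing `f : ℕ → ℝ` with `t ≤ f t ≤ t + 1`. -/
def IsDivisorFn (f : ℕ → ℝ) : Prop :=
  StrictMono f ∧ ∀ t : ℕ, (t : ℝ) ≤ f t ∧ f t ≤ t + 1

/-- `π` is the picking sequence induced by the divisor method with function `f` and
weights `w`: each pick goes to an agent minimizing `f t_i / w_i` (where `t_i` is the
number of picks agent `i` has received so far), ties broken toward lower-numbered agents. -/
def IsDivisorSeq {n : ℕ} (f : ℕ → ℝ) (w : Fin n → ℝ) (π : List (Fin n)) : Prop :=
  ∀ (k : ℕ) (hk : k < π.length) (i : Fin n),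
    f ((π.take k).count (π.get ⟨k, hk⟩)) / w (π.get ⟨k, hk⟩) ≤
      f ((π.take k).count i) / w i ∧
    (i < π.get ⟨k, hk⟩ →
      f ((π.take k).count (π.get ⟨k, hk⟩)) / w (π.get ⟨k, hk⟩) <
        f ((π.take k).count i) / w i)


/-! With utilities

* agent 0: `3 0 0 3 3 3 3 0`,
* agent 1: `0 3 0 0 3 1 2 1`,
* agent 2: `2 0 3 0 0 2 0 1`,

each of the five methods produces, for suitable weights, the picking sequence `0 1 2 0 1 0 2 0`,
in which agent 0 ends up with items `0 3 5 6` (utility 12). Raising her weight moves her third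
pick ahead of agent 1's second one, giving `0 1 2 0 0 1 2 0`: agent 0 now takes item 4 herself,
which sends agent 1 to item 6 and agent 2 to item 5, so agent 0 is left with items `0 3 4 7`
(utility 9). -/

/- Picking only compares utilities, so allocations are invariant under strictly monotone changes
of the utilities; with natural-number utilities they become computable by `decide`. -/
section OrdinalPicking

variable {α β : Type*} [LinearOrder α] [LinearOrder β] {n m : ℕ}

def favoriteOf (u : Fin m → α) (R : Finset (Fin m)) : Option (Fin m) :=
  if h : (R.filter fun j => ∀ j' ∈ R, u j' ≤ u j).Nonempty then
    some ((R.filter fun j => ∀ j' ∈ R, u j' ≤ u j).min' h)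
  else none

def pickStepOf (u : Fin n → Fin m → α)
    (st : Finset (Fin m) × (Fin n → Finset (Fin m))) (a : Fin n) :
    Finset (Fin m) × (Fin n → Finset (Fin m)) :=
  match favoriteOf (u a) st.1 with
  | none => st
  | some j => (st.1.erase j, Function.update st.2 a (insert j (st.2 a)))

def allocateOf (u : Fin n → Fin m → α) (π : List (Fin n)) : Fin n → Finset (Fin m) :=
  (π.foldl (pickStepOf u) (Finset.univ, fun _ => ∅)).2

theorem favoriteOf_comp {g : α → β} (hg : StrictMono g) (u : Fin m → α) (R : Finset (Fin m)) :
    favoriteOf (g ∘ u) R = favoriteOf u R := by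
  simp only [favoriteOf, Function.comp_apply, hg.le_iff_le]

theorem pickStepOf_comp {g : α → β} (hg : StrictMono g) (u : Fin n → Fin m → α) :
    pickStepOf (fun i => g ∘ u i) = pickStepOf u := by
  funext st a
  simp only [pickStepOf, favoriteOf_comp hg]

theorem allocateOf_comp {g : α → β} (hg : StrictMono g) (u : Fin n → Fin m → α)
    (π : List (Fin n)) : allocateOf (fun i => g ∘ u i) π = allocateOf u π := by
  simp only [allocateOf, pickStepOf_comp hg]

theorem allocate_natCast (v : Fin n → Fin m → ℕ) (π : List (Fin n)) :
    allocate (fun i j => (v i j : ℝ)) π = allocateOf v π :=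
  allocateOf_comp Nat.strictMono_cast v π

end OrdinalPicking

def NotWeightMonotone (f : ℕ → ℝ) : Prop :=
  ∃ (m : ℕ) (w w' : Fin 3 → ℝ) (u : Fin 3 → Fin m → ℝ) (π π' : List (Fin 3)),
    0 < w 2 ∧ w 2 < w 1 ∧ w 1 < w 0 ∧
    w 0 < w' 0 ∧ w' 1 = w 1 ∧ w' 2 = w 2 ∧
    (∀ i j, 0 ≤ u i j) ∧
    π.length = m ∧ π'.length = m ∧
    IsDivisorSeq f w π ∧ IsDivisorSeq f w' π' ∧
    (∑ x ∈ allocate u π' 0, u 0 x) < ∑ x ∈ allocate u π 0, u 0 x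

section Counterexample

def utility : Fin 3 → Fin 8 → ℕ :=
  ![![3, 0, 0, 3, 3, 3, 3, 0], ![0, 3, 0, 0, 3, 1, 2, 1], ![2, 0, 3, 0, 0, 2, 0, 1]]

def seqBefore : List (Fin 3) := [0, 1, 2, 0, 1, 0, 2, 0]

def seqAfter : List (Fin 3) := [0, 1, 2, 0, 0, 1, 2, 0]

theorem allocateOf_utility_seqBefore : allocateOf utility seqBefore 0 = {0, 3, 5, 6} := by
  decide

theorem allocateOf_utility_seqAfter : allocateOf utility seqAfter 0 = {0, 3, 4, 7} := by
  decide

theorem utility_seqAfter_lt_seqBefore :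
    ∑ x ∈ allocate (fun i j => (utility i j : ℝ)) seqAfter 0, (utility 0 x : ℝ) <
      ∑ x ∈ allocate (fun i j => (utility i j : ℝ)) seqBefore 0, (utility 0 x : ℝ) := by
  rw [allocate_natCast, allocate_natCast, allocateOf_utility_seqBefore,
    allocateOf_utility_seqAfter]
  exact_mod_cast (by decide : ∑ x ∈ {0, 3, 4, 7}, utility 0 x < ∑ x ∈ {0, 3, 5, 6}, utility 0 x)

theorem notWeightMonotone_of_isDivisorSeq {f : ℕ → ℝ} {a a' b : ℝ} (hb : 1 < b) (hba : b < a)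
    (haa' : a < a') (hbefore : IsDivisorSeq f ![a, b, 1] seqBefore)
    (hafter : IsDivisorSeq f ![a', b, 1] seqAfter) : NotWeightMonotone f :=
  ⟨8, ![a, b, 1], ![a', b, 1], fun i j => utility i j, seqBefore, seqAfter,
    one_pos, hb, hba, haa', rfl, rfl, fun _ _ => Nat.cast_nonneg _, rfl, rfl,
    hbefore, hafter, utility_seqAfter_lt_seqBefore⟩

end Counterexample

section TraditionalMethods

def adams (t : ℕ) : ℝ := t

noncomputable def jefferson (t : ℕ) : ℝ := t + 1

noncomputable def webster (t : ℕ) : ℝ := t + 1 / 2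

noncomputable def hill (t : ℕ) : ℝ := √(t * (t + 1))

noncomputable def dean (t : ℕ) : ℝ := t * (t + 1) / (t + 1 / 2)

theorem notWeightMonotone_adams : NotWeightMonotone adams := by
  refine notWeightMonotone_of_isDivisorSeq (a := 2) (a' := 29 / 12) (b := 29 / 24)
    (by norm_num) (by norm_num) (by norm_num) ?_ ?_ <;>
  · intro k hk i
    replace hk : k < 8 := hk
    interval_cases k <;> fin_cases i <;> simp [seqBefore, seqAfter, adams] <;> norm_num

theorem notWeightMonotone_jefferson : NotWeightMonotone jefferson := by
  refine notWeightMonotone_of_isDivisorSeq (a := 19 / 12) (a' := 43 / 24) (b := 9 / 8)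
    (by norm_num) (by norm_num) (by norm_num) ?_ ?_ <;>
  · intro k hk i
    replace hk : k < 8 := hk
    interval_cases k <;> fin_cases i <;> simp [seqBefore, seqAfter, jefferson] <;> norm_num

theorem notWeightMonotone_webster : NotWeightMonotone webster := by
  refine notWeightMonotone_of_isDivisorSeq (a := 43 / 24) (a' := 13 / 6) (b := 29 / 24)
    (by norm_num) (by norm_num) (by norm_num) ?_ ?_ <;>
  · intro k hk i
    replace hk : k < 8 := hk
    interval_cases k <;> fin_cases i <;> simp [seqBefore, seqAfter, webster] <;> norm_num

theorem sqrt_two_mem_Ioo : √2 ∈ Set.Ioo (1.414 : ℝ) 1.415 := by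
  constructor <;> [rw [Real.lt_sqrt (by norm_num)]; rw [Real.sqrt_lt' (by norm_num)]] <;> norm_num

theorem sqrt_three_mem_Ioo : √3 ∈ Set.Ioo (1.732 : ℝ) 1.733 := by
  constructor <;> [rw [Real.lt_sqrt (by norm_num)]; rw [Real.sqrt_lt' (by norm_num)]] <;> norm_num

theorem notWeightMonotone_hill : NotWeightMonotone hill := by
  obtain ⟨h2l, h2u⟩ := sqrt_two_mem_Ioo
  obtain ⟨h3l, h3u⟩ := sqrt_three_mem_Ioo
  have h6 : 0 < √2 * √3 := by positivity
  refine notWeightMonotone_of_isDivisorSeq (a := 15 / 8) (a' := 53 / 24) (b := 7 / 6)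
    (by norm_num) (by norm_num) (by norm_num) ?_ ?_ <;>
  · intro k hk i
    replace hk : k < 8 := hk
    interval_cases k <;> fin_cases i <;> simp [seqBefore, seqAfter, hill] <;> norm_num <;>
      (try constructor) <;> nlinarith

theorem notWeightMonotone_dean : NotWeightMonotone dean := by
  refine notWeightMonotone_of_isDivisorSeq (a := 2) (a' := 9 / 4) (b := 5 / 4)
    (by norm_num) (by norm_num) (by norm_num) ?_ ?_ <;>
  · intro k hk i
    replace hk : k < 8 := hk
    interval_cases k <;> fin_cases i <;> simp [seqBefore, seqAfter, dean] <;> norm_num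

end TraditionalMethods

/-- None of the five traditional divisor methods — Adams, Jefferson,
Webster, Hill, Dean — satisfies weight-monotonicity even with three agents: for each
of these methods there are an instance with three agents (weights
`w 0 > w 1 > w 2 > 0` and additive utilities) and an increased weight `w' 0 > w 0`
for agent 1 such that agent 1 receives strictly less utility from the allocation the
method produces with weights `w'` than with weights `w`. -/
theorem traditional_divisor_methods_not_weight_monotone
    (f : ℕ → ℝ)
    (hf : f = (fun t : ℕ => (t : ℝ)) ∨
          f = (fun t : ℕ => (t : ℝ) + 1) ∨
          f = (fun t : ℕ => (t : ℝ) + 1 / 2) ∨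
          f = (fun t : ℕ => Real.sqrt ((t : ℝ) * ((t : ℝ) + 1))) ∨
          f = (fun t : ℕ => (t : ℝ) * ((t : ℝ) + 1) / ((t : ℝ) + 1 / 2))) :
    ∃ (m : ℕ) (w w' : Fin 3 → ℝ) (u : Fin 3 → Fin m → ℝ) (π π' : List (Fin 3)),
      0 < w 2 ∧ w 2 < w 1 ∧ w 1 < w 0 ∧
      w 0 < w' 0 ∧ w' 1 = w 1 ∧ w' 2 = w 2 ∧
      (∀ i j, 0 ≤ u i j) ∧
      π.length = m ∧ π'.length = m ∧
      IsDivisorSeq f w π ∧ IsDivisorSeq f w' π' ∧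
      (∑ x ∈ allocate u π' 0, u 0 x) < ∑ x ∈ allocate u π 0, u 0 x := by
  rcases hf with rfl | rfl | rfl | rfl | rfl
  exacts [notWeightMonotone_adams, notWeightMonotone_jefferson, notWeightMonotone_webster,
    notWeightMonotone_hill, notWeightMonotone_dean]
end
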